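/- arXiv:2310.20571 — 2 statements merged into one kernel-verified Lean document; each statement's English description precedes it below -/
import Mathlib

section
/- Let f : I₁ → I₂ be a descent-preserving poset isomorphism between left weak Bruhat intervals in S_n, and suppose γ ⋖ γ' is a cover in I₁ with γ' = s_iγ and f(γ') = s_j f(γ). Then j ≠ i - 1. -/
/-! If `j = i - 1`, the cover `γ ⋖ s_i γ` makes `i` an ascent of `γ`, while `f γ ⋖ s_j f γ` makes
`j` an ascent of `f γ` and a descent of `f (s_i γ)`; by descent preservation the same holds for `γ`
and `s_i γ`. In the one-line notation of `γ`, the letters `i, i + 1` appear in this order and `s_i γ`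
swaps them, so `j ∈ Des_L (s_i γ)` puts `i + 1`, hence also `i`, before `i - 1` in `γ`, making `i - 1`
a descent of `γ`: a contradiction. -/

/-- The left inversion set `Inv_L(σ) = {(i,j) : i < j, σ(i) > σ(j)}`. -/
def InvL {n : ℕ} (σ : Equiv.Perm (Fin n)) : Set (Fin n × Fin n) :=
  {p | p.1 < p.2 ∧ σ p.2 < σ p.1}

/-- The left weak Bruhat order: `σ ≤_L ρ` iff `Inv_L(σ) ⊆ Inv_L(ρ)`. -/
def lLE {n : ℕ} (σ ρ : Equiv.Perm (Fin n)) : Prop := InvL σ ⊆ InvL ρ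

/-- The right inversion set `Inv_R(σ) = {(σ(i),σ(j)) : i < j, σ(i) > σ(j)}`. -/
def InvR {n : ℕ} (σ : Equiv.Perm (Fin n)) : Set (Fin n × Fin n) :=
  {p | p.2 < p.1 ∧ σ⁻¹ p.1 < σ⁻¹ p.2}

/-- The right weak Bruhat order: `σ ≤_R ρ` iff `Inv_R(σ) ⊆ Inv_R(ρ)`. -/
def rLE {n : ℕ} (σ ρ : Equiv.Perm (Fin n)) : Prop := InvR σ ⊆ InvR ρ

/-- The left weak Bruhat interval `[σ, ρ]_L`. -/
def lInterval {n : ℕ} (σ ρ : Equiv.Perm (Fin n)) : Set (Equiv.Perm (Fin n)) :=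
  {γ | lLE σ γ ∧ lLE γ ρ}

/-- The right weak Bruhat interval `[σ, ρ]_R`. -/
def rInterval {n : ℕ} (σ ρ : Equiv.Perm (Fin n)) : Set (Equiv.Perm (Fin n)) :=
  {γ | rLE σ γ ∧ rLE γ ρ}

/-- The Coxeter length of a permutation, i.e. its number of inversions. -/
def len {n : ℕ} (σ : Equiv.Perm (Fin n)) : ℕ :=
  (Finset.univ.filter fun p : Fin n × Fin n => p.1 < p.2 ∧ σ p.2 < σ p.1).card

/-- The simple transposition `s_i` (swapping the adjacent values `i`, `i+1`). -/
def sgen {n : ℕ} (i : Fin n) : Equiv.Perm (Fin (n + 1)) :=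
  Equiv.swap i.castSucc i.succ

/-- The left descent set `Des_L(σ) = {i : ℓ(s_i σ) < ℓ(σ)}`. -/
def DesL {n : ℕ} (σ : Equiv.Perm (Fin (n + 1))) : Set (Fin n) :=
  {i | len (sgen i * σ) < len σ}

section

variable {n : ℕ}

@[simp]
lemma sgen_apply_castSucc (i : Fin n) : sgen i i.castSucc = i.succ :=
  Equiv.swap_apply_left _ _

@[simp]
lemma sgen_apply_succ (i : Fin n) : sgen i i.succ = i.castSucc :=
  Equiv.swap_apply_right _ _

lemma sgen_mul_self (i : Fin n) : sgen i * sgen i = 1 :=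
  Equiv.swap_mul_self _ _

lemma sgen_mul_inv_apply (i : Fin n) (σ : Equiv.Perm (Fin (n + 1))) (x : Fin (n + 1)) :
    (sgen i * σ)⁻¹ x = σ⁻¹ (sgen i x) := by
  rw [mul_inv_rev, sgen, Equiv.swap_inv, Equiv.Perm.mul_apply]

lemma sgen_lt_sgen_iff (i : Fin n) {x y : Fin (n + 1)}
    (hxy : x ≠ i.castSucc ∨ y ≠ i.succ) (hyx : x ≠ i.succ ∨ y ≠ i.castSucc) :
    sgen i x < sgen i y ↔ x < y := by
  simp only [sgen, Equiv.swap_apply_def]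
  split_ifs <;> subst_vars <;> simp_all [← Fin.val_fin_lt, Fin.ext_iff] <;> omega

lemma len_sgen_mul_of_lt {σ : Equiv.Perm (Fin (n + 1))} {i : Fin n}
    (h : σ⁻¹ i.castSucc < σ⁻¹ i.succ) : len (sgen i * σ) = len σ + 1 := by
  set a := σ⁻¹ i.castSucc
  set b := σ⁻¹ i.succ
  have ha : σ a = i.castSucc := σ.apply_symm_apply _
  have hb : σ b = i.succ := σ.apply_symm_apply _
  have hinv : ∀ x y, x < y → (x, y) ≠ (a, b) →
      ((sgen i * σ) y < (sgen i * σ) x ↔ σ y < σ x) := by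
    intro x y hxy hne
    refine sgen_lt_sgen_iff i ?_ ?_ <;> by_contra! hc
    · rw [← ha, ← hb] at hc
      exact h.not_gt (σ.injective hc.1 ▸ σ.injective hc.2 ▸ hxy)
    · rw [← ha, ← hb] at hc
      exact hne (by rw [σ.injective hc.1, σ.injective hc.2])
  -- the inversions of `s_i σ` are those of `σ` plus the pair `(a, b)` of positions of `i`, `i + 1`
  unfold len
  rw [← Finset.card_insert_of_notMem (s := Finset.univ.filter _) (a := (a, b))]
  · congr 1
    ext ⟨x, y⟩
    simp only [Finset.mem_insert, Finset.mem_filter, Finset.mem_univ, true_and]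
    by_cases hp : (x, y) = (a, b)
    · obtain ⟨rfl, rfl⟩ := Prod.ext_iff.mp hp
      simp [ha, hb, h]
    · simp only [hp, false_or]
      exact and_congr_right fun hxy ↦ hinv x y hxy hp
  · simp [ha, hb, Fin.castSucc_lt_succ.not_gt]

lemma mem_desL_iff (σ : Equiv.Perm (Fin (n + 1))) (i : Fin n) :
    i ∈ DesL σ ↔ σ⁻¹ i.succ < σ⁻¹ i.castSucc := by
  have hne : σ⁻¹ i.castSucc ≠ σ⁻¹ i.succ := σ⁻¹.injective.ne Fin.castSucc_lt_succ.ne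
  change len (sgen i * σ) < len σ ↔ _
  rcases hne.lt_or_gt with h | h
  · exact iff_of_false (by simp [len_sgen_mul_of_lt h]) h.asymm
  · have hτ : (sgen i * σ)⁻¹ i.castSucc < (sgen i * σ)⁻¹ i.succ := by
      simpa only [sgen_mul_inv_apply, sgen_apply_castSucc, sgen_apply_succ] using h
    have hlen := len_sgen_mul_of_lt hτ
    rw [← mul_assoc, sgen_mul_self, one_mul] at hlen
    exact iff_of_true (by omega) h

lemma mem_desL_sgen_mul_iff {σ : Equiv.Perm (Fin (n + 1))} {i : Fin n} :
    i ∈ DesL (sgen i * σ) ↔ i ∉ DesL σ := by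
  have hne : σ⁻¹ i.castSucc ≠ σ⁻¹ i.succ := σ⁻¹.injective.ne Fin.castSucc_lt_succ.ne
  simp only [mem_desL_iff, sgen_mul_inv_apply, sgen_apply_castSucc, sgen_apply_succ, not_lt,
    hne.le_iff_lt]

lemma len_le_len_of_lLE {σ ρ : Equiv.Perm (Fin n)} (h : lLE σ ρ) : len σ ≤ len ρ :=
  Finset.card_le_card <| Finset.monotone_filter_right _ fun _ _ hp ↦ h hp

lemma notMem_desL_of_lLE_sgen_mul {σ : Equiv.Perm (Fin (n + 1))} {i : Fin n}
    (h : lLE σ (sgen i * σ)) : i ∉ DesL σ :=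
  (len_le_len_of_lLE h).not_gt

lemma mem_desL_of_notMem_desL_of_mem_desL_sgen_mul {γ : Equiv.Perm (Fin (n + 1))} {i j : Fin n}
    (hji : (j : ℕ) + 1 = i) (hi : i ∉ DesL γ) (hj : j ∈ DesL (sgen i * γ)) : j ∈ DesL γ := by
  have hsucc : j.succ = i.castSucc := Fin.ext (by simp [hji])
  have hfix : sgen i j.castSucc = j.castSucc :=
    Equiv.swap_apply_of_ne_of_ne (by simp [Fin.ext_iff]; omega) (by simp [Fin.ext_iff]; omega)
  rw [mem_desL_iff] at hi hj ⊢
  rw [sgen_mul_inv_apply, sgen_mul_inv_apply, hfix, hsucc, sgen_apply_castSucc] at hj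
  rw [hsucc]
  exact (not_lt.mp hi).trans_lt hj

end

theorem cover_label_ne_pred_general {n : ℕ}
    (σ₁ ρ₁ : Equiv.Perm (Fin (n + 1)))
    (f : Equiv.Perm (Fin (n + 1)) → Equiv.Perm (Fin (n + 1)))
    (hord : ∀ x ∈ lInterval σ₁ ρ₁, ∀ y ∈ lInterval σ₁ ρ₁, (lLE x y ↔ lLE (f x) (f y)))
    (hdes : ∀ x ∈ lInterval σ₁ ρ₁, DesL (f x) = DesL x)
    (γ γ' : Equiv.Perm (Fin (n + 1))) (hγ : γ ∈ lInterval σ₁ ρ₁) (hγ' : γ' ∈ lInterval σ₁ ρ₁)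
    (i j : Fin n) (hcov : γ' = sgen i * γ) (hle : lLE γ γ')
    (hj : f γ' = sgen j * f γ) :
    (j : ℕ) + 1 ≠ (i : ℕ) := by
  intro hji
  have hf_le : lLE (f γ) (f γ') := (hord γ hγ γ' hγ').mp hle
  have hj_asc : j ∉ DesL (f γ) := notMem_desL_of_lLE_sgen_mul (hj ▸ hf_le)
  have hj_desc : j ∈ DesL (f γ') := hj ▸ mem_desL_sgen_mul_iff.mpr hj_asc
  have hi_asc : i ∉ DesL γ := notMem_desL_of_lLE_sgen_mul (hcov ▸ hle)
  rw [hdes γ hγ] at hj_asc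
  rw [hdes γ' hγ', hcov] at hj_desc
  exact hj_asc (mem_desL_of_notMem_desL_of_mem_desL_sgen_mul hji hi_asc hj_desc)

/-- If `f` is a descent-preserving poset isomorphism between left weak Bruhat intervals,
`γ ⋖ γ'` is a cover in `I₁` with `γ' = s_i γ`, and `f(γ') = s_j f(γ)`, then `j ≠ i - 1`. -/
theorem cover_label_ne_pred {n : ℕ}
    (σ₁ ρ₁ σ₂ ρ₂ : Equiv.Perm (Fin (n + 1))) (h₁ : lLE σ₁ ρ₁) (h₂ : lLE σ₂ ρ₂)
    (f : Equiv.Perm (Fin (n + 1)) → Equiv.Perm (Fin (n + 1)))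
    (hbij : Set.BijOn f (lInterval σ₁ ρ₁) (lInterval σ₂ ρ₂))
    (hord : ∀ x ∈ lInterval σ₁ ρ₁, ∀ y ∈ lInterval σ₁ ρ₁, (lLE x y ↔ lLE (f x) (f y)))
    (hdes : ∀ x ∈ lInterval σ₁ ρ₁, DesL (f x) = DesL x)
    (γ γ' : Equiv.Perm (Fin (n + 1))) (hγ : γ ∈ lInterval σ₁ ρ₁) (hγ' : γ' ∈ lInterval σ₁ ρ₁)
    (i j : Fin n) (hcov : γ' = sgen i * γ) (hle : lLE γ γ')
    (hj : f γ' = sgen j * f γ) :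
    (j : ℕ) + 1 ≠ (i : ℕ) :=
  cover_label_ne_pred_general σ₁ ρ₁ f hord hdes γ γ' hγ hγ' i j hcov hle hj
end

section
/- Let P be a Schur labeled skew shape poset on {1,…,n}, i.e., P = poset(τ) for some Schur labeling τ of a skew shape. Then P is a regular poset if and only if the canonical Schur labeling τ_P is distinguished. -/
/-- A skew partition `λ/μ`: a pair of Young diagrams with `μ ⊆ λ`. -/
structure SkewShape where
  outer : YoungDiagram
  inner : YoungDiagram
  le : inner ≤ outer

/-- The cells of the skew diagram `λ/μ` (pairs `(row, column)`). -/
def SkewShape.cells (s : SkewShape) : Finset (ℕ × ℕ) := s.outer.cells \ s.inner.cells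

/-- A bijective tableau of shape `λ/μ` of size `n`: a filling of the cells with the
`n` distinct entries of `Fin n`. -/
def IsBijFilling (s : SkewShape) (n : ℕ) (τ : ℕ × ℕ → Fin n) : Prop :=
  Set.BijOn τ ↑s.cells Set.univ

/-- A standard Young tableau of shape `λ/μ`: a bijective filling whose rows increase
left to right and whose columns increase top to bottom. -/
def IsSYT (s : SkewShape) (n : ℕ) (T : ℕ × ℕ → Fin n) : Prop :=
  IsBijFilling s n T ∧
  (∀ i j, (i, j) ∈ s.cells → (i, j + 1) ∈ s.cells → T (i, j) < T (i, j + 1)) ∧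
  (∀ i j, (i, j) ∈ s.cells → (i + 1, j) ∈ s.cells → T (i, j) < T (i + 1, j))

/-- A Schur labeling: a bijective filling whose rows strictly decrease left to right
and whose columns strictly increase top to bottom. -/
def IsSchurLabeling (s : SkewShape) (n : ℕ) (τ : ℕ × ℕ → Fin n) : Prop :=
  IsBijFilling s n τ ∧
  (∀ i j, (i, j) ∈ s.cells → (i, j + 1) ∈ s.cells → τ (i, j + 1) < τ (i, j)) ∧
  (∀ i j, (i, j) ∈ s.cells → (i + 1, j) ∈ s.cells → τ (i, j) < τ (i + 1, j))

/-- A distinguished Schur labeling: `τ_B ≥ τ_{B'}` whenever `B` is weakly below and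
weakly left of `B'`. -/
def IsDistinguished (s : SkewShape) (n : ℕ) (τ : ℕ × ℕ → Fin n) : Prop :=
  IsSchurLabeling s n τ ∧
  ∀ B ∈ s.cells, ∀ B' ∈ s.cells, B'.1 ≤ B.1 → B.2 ≤ B'.2 → τ B' ≤ τ B

/-- `π = read_τ(T)`, i.e. `π(τ(B)) = T(B)` for every box `B`; since `τ` is a bijective
filling this determines `π` completely. -/
def IsReading (s : SkewShape) {n : ℕ} (τ T : ℕ × ℕ → Fin n) (π : Equiv.Perm (Fin n)) : Prop :=
  ∀ B ∈ s.cells, π (τ B) = T B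

/-- The poset `poset(τ)` on labels: `x ≤ y` iff the box of `x` is weakly upper-left of
the box of `y`. -/
def posetRel (s : SkewShape) {n : ℕ} (τ : ℕ × ℕ → Fin n) (x y : Fin n) : Prop :=
  ∃ B ∈ s.cells, ∃ B' ∈ s.cells, τ B = x ∧ τ B' = y ∧ B.1 ≤ B'.1 ∧ B.2 ≤ B'.2

/-- Two boxes are adjacent (share an edge). -/
def AdjBox (B B' : ℕ × ℕ) : Prop :=
  (B.1 = B'.1 ∧ (B.2 + 1 = B'.2 ∨ B'.2 + 1 = B.2)) ∨
  (B.2 = B'.2 ∧ (B.1 + 1 = B'.1 ∨ B'.1 + 1 = B.1))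

/-- Two boxes lie in the same connected component of the skew diagram. -/
def SameComp (s : SkewShape) (B B' : ℕ × ℕ) : Prop :=
  Relation.ReflTransGen (fun x y => x ∈ s.cells ∧ y ∈ s.cells ∧ AdjBox x y) B B'

/-- The skew diagram is basic: it contains no empty rows and no empty columns. -/
def IsBasic (s : SkewShape) : Prop :=
  (∀ i i' : ℕ, i ≤ i' → (∃ j, (i', j) ∈ s.cells) → ∃ j, (i, j) ∈ s.cells) ∧
  (∀ j j' : ℕ, j ≤ j' → (∃ i, (i, j') ∈ s.cells) → ∃ i, (i, j) ∈ s.cells)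

/-- Condition (iii) in the definition of the canonical Schur labeling `τ_P`: the minimal
entries of the connected components, ordered from the top, increase. -/
def CompMinCond (s : SkewShape) {n : ℕ} (τ : ℕ × ℕ → Fin n) : Prop :=
  ∀ B ∈ s.cells, ∀ B' ∈ s.cells, ¬ SameComp s B B' → B.1 < B'.1 →
    ∃ B₀ ∈ s.cells, SameComp s B B₀ ∧ ∀ B₁ ∈ s.cells, SameComp s B' B₁ → τ B₀ < τ B₁

/-- A binary relation on `{1,…,n}` is regular if for all `x ≤_P z` and `y` between `x`
and `z` as integers, `x ≤_P y` or `y ≤_P z`. -/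
def RegularRel {n : ℕ} (r : Fin n → Fin n → Prop) : Prop :=
  ∀ x y z : Fin n, r x z → ((x < y ∧ y < z) ∨ (z < y ∧ y < x)) → r x y ∨ r y z

/-!
Distinguished implies regular: if `x ≤_P z` and `y` is comparable to neither, the box of `y`
lies weakly north-east of the boxes of both `x` and `z`, or weakly south-west of both, so a
distinguished labeling puts `y` below both or above both, never strictly between them.

Regular implies distinguished: inside one connected component the inequality holds for every
Schur labeling, by walking from the upper box to the lower one through the overlaps of
consecutive rows with left and down steps only, along which labels increase. Comparable labels
lie in one component, so take `B` below-left of `B'` in different components and suppose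
`τ B < τ B'`. The component of `B'` starts above that of `B`, so by the ordering of component
minima it contains a label smaller than `τ B`; a path inside it crosses the value `τ B` along an
edge `U`–`V`. Regularity applied to the comparable pair `τ U`, `τ V` makes `τ B` comparable to
one of them, which is impossible.
-/

open Relation

theorem Relation.ReflTransGen.exists_rel_crossing {α β : Type*} [LinearOrder β]
    {r : α → α → Prop} {f : α → β} {a b : α} (h : ReflTransGen r a b) {x : β}
    (hb : f b < x) (ha : x ≤ f a) :
    ∃ u v, ReflTransGen r a u ∧ r u v ∧ f v < x ∧ x ≤ f u := by
  induction h with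
  | refl => exact absurd ha hb.not_ge
  | @tail c b hac hcb ih =>
    by_cases hc : f c < x
    · exact ih hc
    · exact ⟨c, b, hac, hcb, hb, not_lt.mp hc⟩

theorem RegularRel.symmGen_of_between {n : ℕ} {r : Fin n → Fin n → Prop} (hreg : RegularRel r)
    {u v y : Fin n} (huv : SymmGen r u v) (hvy : v < y) (hyu : y < u) :
    SymmGen r u y ∨ SymmGen r v y := by
  rcases huv with h | h
  · rcases hreg u y v h (.inr ⟨hvy, hyu⟩) with h' | h'
    · exact .inl (.of_rel h')
    · exact .inr (.of_rel_symm h')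
  · rcases hreg v y u h (.inl ⟨hvy, hyu⟩) with h' | h'
    · exact .inr (.of_rel h')
    · exact .inl (.of_rel_symm h')

theorem AdjBox.symm {B B' : ℕ × ℕ} (h : AdjBox B B') : AdjBox B' B := by
  unfold AdjBox at *
  omega

theorem AdjBox.le_or_ge {B B' : ℕ × ℕ} (h : AdjBox B B') : B ≤ B' ∨ B' ≤ B := by
  simp only [AdjBox, Prod.le_def] at *
  omega

namespace SkewShape

variable (s : SkewShape)

theorem ordConnected_cells : (s.cells : Set (ℕ × ℕ)).OrdConnected := by
  refine ⟨fun B hB D hD C ⟨hBC, hCD⟩ => ?_⟩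
  simp only [Finset.mem_coe, SkewShape.cells, Finset.mem_sdiff, YoungDiagram.mem_cells] at *
  exact ⟨s.outer.isLowerSet hCD hD.1, fun hC => hB.2 (s.inner.isLowerSet hBC hC)⟩

def RowsOverlap (r : ℕ) : Prop :=
  ∃ q, (r, q) ∈ s.cells ∧ (r + 1, q) ∈ s.cells

variable {s}

theorem RowsOverlap.exists_mem_between {r a b d : ℕ} (hr : s.RowsOverlap r)
    (hB : (a, b) ∈ s.cells) (hD : (r, d) ∈ s.cells) (hra : r < a) (hbd : b ≤ d) :
    ∃ e, b ≤ e ∧ e ≤ d ∧ (r, e) ∈ s.cells ∧ (r + 1, e) ∈ s.cells := by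
  obtain ⟨q, hq, hq'⟩ := hr
  rcases lt_or_ge q b with hqb | hbq
  · exact ⟨b, le_rfl, hbd, s.ordConnected_cells.out hq hD ⟨⟨le_rfl, hqb.le⟩, ⟨le_rfl, hbd⟩⟩,
      s.ordConnected_cells.out hq' hB ⟨⟨le_rfl, hqb.le⟩, ⟨hra, le_rfl⟩⟩⟩
  rcases le_or_gt q d with hqd | hdq
  · exact ⟨q, hbq, hqd, hq, hq'⟩
  · exact ⟨d, hbd, le_rfl, hD,
      s.ordConnected_cells.out hD hq' ⟨⟨r.le_succ, le_rfl⟩, ⟨le_rfl, hdq.le⟩⟩⟩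

end SkewShape

section SameComp

variable {s : SkewShape}

theorem SameComp.symm {B B' : ℕ × ℕ} (h : SameComp s B B') : SameComp s B' B := by
  have : Std.Symm fun x y => x ∈ s.cells ∧ y ∈ s.cells ∧ AdjBox x y :=
    ⟨fun _ _ hxy => ⟨hxy.2.1, hxy.1, hxy.2.2.symm⟩⟩
  exact Std.Symm.symm (r := ReflTransGen _) _ _ h

theorem sameComp_of_sameRow {c b d : ℕ} (hB : (c, b) ∈ s.cells) (hD : (c, d) ∈ s.cells)
    (hbd : b ≤ d) : SameComp s (c, b) (c, d) := by
  induction d, hbd using Nat.le_induction with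
  | base => exact .refl
  | succ d hbd ih =>
    have hmem : (c, d) ∈ s.cells :=
      s.ordConnected_cells.out hB hD ⟨⟨le_rfl, hbd⟩, ⟨le_rfl, d.le_succ⟩⟩
    exact (ih hmem).tail ⟨hmem, hD, .inl ⟨rfl, .inl rfl⟩⟩

theorem sameComp_of_sameCol {a c b : ℕ} (hB : (a, b) ∈ s.cells) (hD : (c, b) ∈ s.cells)
    (hac : a ≤ c) : SameComp s (a, b) (c, b) := by
  induction c, hac using Nat.le_induction with
  | base => exact .refl
  | succ c hac ih =>
    have hmem : (c, b) ∈ s.cells :=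
      s.ordConnected_cells.out hB hD ⟨⟨hac, le_rfl⟩, ⟨c.le_succ, le_rfl⟩⟩
    exact (ih hmem).tail ⟨hmem, hD, .inr ⟨rfl, .inl rfl⟩⟩

theorem sameComp_of_le {B B' : ℕ × ℕ} (hB : B ∈ s.cells) (hB' : B' ∈ s.cells) (h : B ≤ B') :
    SameComp s B B' := by
  obtain ⟨a, b⟩ := B
  obtain ⟨c, d⟩ := B'
  have hcorner : (c, b) ∈ s.cells :=
    s.ordConnected_cells.out hB hB' ⟨⟨h.1, le_rfl⟩, ⟨le_rfl, h.2⟩⟩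
  exact (sameComp_of_sameCol hB hcorner h.1).trans (sameComp_of_sameRow hcorner hB' h.2)

theorem SameComp.rowsOverlap {C D : ℕ × ℕ} (h : SameComp s C D) {r : ℕ} (hDr : D.1 ≤ r)
    (hrC : r < C.1) : s.RowsOverlap r := by
  induction h with
  | refl => omega
  | @tail E D _ hED ih =>
    by_cases hEr : E.1 ≤ r
    · exact ih hEr
    obtain ⟨hE, hD, hadj⟩ := hED
    rcases hadj with ⟨hrow, -⟩ | ⟨hcol, hup | hdown⟩
    · omega
    · omega
    · obtain rfl : r = D.1 := by omega
      have hED : E = (D.1 + 1, D.2) := Prod.ext hdown.symm hcol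
      exact ⟨D.2, hD, hED ▸ hE⟩

end SameComp

theorem posetRel_apply_iff {s : SkewShape} {n : ℕ} {τ : ℕ × ℕ → Fin n}
    (hτ : Set.InjOn τ s.cells) {B B' : ℕ × ℕ} (hB : B ∈ s.cells) (hB' : B' ∈ s.cells) :
    posetRel s τ (τ B) (τ B') ↔ B ≤ B' := by
  refine ⟨fun ⟨C, hC, C', hC', hCB, hCB', hle⟩ => ?_, fun h => ⟨B, hB, B', hB', rfl, rfl, h⟩⟩
  rwa [← hτ hC hB hCB, ← hτ hC' hB' hCB']

namespace IsSchurLabeling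

variable {s : SkewShape} {n : ℕ} {τ : ℕ × ℕ → Fin n} (hs : IsSchurLabeling s n τ)
include hs

theorem apply_le_of_sameRow {c b d : ℕ} (hB : (c, b) ∈ s.cells) (hD : (c, d) ∈ s.cells)
    (hbd : b ≤ d) : τ (c, d) ≤ τ (c, b) := by
  induction d, hbd using Nat.le_induction with
  | base => exact le_rfl
  | succ d hbd ih =>
    have hmem : (c, d) ∈ s.cells :=
      s.ordConnected_cells.out hB hD ⟨⟨le_rfl, hbd⟩, ⟨le_rfl, d.le_succ⟩⟩
    exact (hs.2.1 c d hmem hD).le.trans (ih hmem)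

theorem apply_le_of_rowsOverlap {a b c d : ℕ} (hB : (a, b) ∈ s.cells) (hca : c ≤ a)
    (hov : ∀ r, c ≤ r → r < a → s.RowsOverlap r) (hD : (c, d) ∈ s.cells) (hbd : b ≤ d) :
    τ (c, d) ≤ τ (a, b) := by
  induction hca using Nat.decreasingInduction generalizing d with
  | self => exact hs.apply_le_of_sameRow hB hD hbd
  | of_succ c hca ih =>
    obtain ⟨e, hbe, hed, hce, hce'⟩ := (hov c le_rfl hca).exists_mem_between hB hD hca hbd
    calc τ (c, d) ≤ τ (c, e) := hs.apply_le_of_sameRow hce hD hed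
      _ ≤ τ (c + 1, e) := (hs.2.2 c e hce hce').le
      _ ≤ τ (a, b) := ih (fun r hr hra => hov r (by omega) hra) hce' hbe

theorem apply_le_of_sameComp {B B' : ℕ × ℕ} (hB : B ∈ s.cells) (hB' : B' ∈ s.cells)
    (h : SameComp s B B') (h₁ : B'.1 ≤ B.1) (h₂ : B.2 ≤ B'.2) : τ B' ≤ τ B :=
  hs.apply_le_of_rowsOverlap hB h₁ (fun _ hr hrB => h.rowsOverlap hr hrB) hB' h₂

theorem sameComp_of_symmGen_posetRel {B B' : ℕ × ℕ} (hB : B ∈ s.cells)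
    (hB' : B' ∈ s.cells) (h : SymmGen (posetRel s τ) (τ B) (τ B')) : SameComp s B B' := by
  rcases h with h | h
  · exact sameComp_of_le hB hB' ((posetRel_apply_iff hs.1.injOn hB hB').1 h)
  · exact (sameComp_of_le hB' hB ((posetRel_apply_iff hs.1.injOn hB' hB).1 h)).symm

theorem apply_le_of_regularRel_of_not_sameComp (hmin : CompMinCond s τ)
    (hreg : RegularRel (posetRel s τ)) {B B' : ℕ × ℕ} (hB : B ∈ s.cells) (hB' : B' ∈ s.cells)
    (hcomp : ¬ SameComp s B B') (hrow : B'.1 < B.1) : τ B' ≤ τ B := by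
  by_contra! hlt
  obtain ⟨B₀, -, hB'B₀, hB₀⟩ := hmin B' hB' B hB (fun h => hcomp h.symm) hrow
  obtain ⟨U, V, hB'U, ⟨hU, hV, hUV⟩, hVB, hBU⟩ :=
    hB'B₀.exists_rel_crossing (f := τ) (hB₀ B hB .refl) hlt.le
  have hUcomp : ¬ SameComp s B U := fun h => hcomp (h.trans (SameComp.symm hB'U))
  have hVcomp : ¬ SameComp s B V := fun h =>
    hcomp (h.trans (SameComp.symm (hB'U.tail ⟨hU, hV, hUV⟩)))
  have hBU_lt : τ B < τ U := hBU.lt_of_ne fun h => hUcomp (hs.1.injOn hB hU h ▸ .refl)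
  have hUV : SymmGen (posetRel s τ) (τ U) (τ V) := by
    rcases hUV.le_or_ge with h | h
    · exact .of_rel ((posetRel_apply_iff hs.1.injOn hU hV).2 h)
    · exact .of_rel_symm ((posetRel_apply_iff hs.1.injOn hV hU).2 h)
  rcases hreg.symmGen_of_between hUV hVB hBU_lt with h | h
  · exact hUcomp (hs.sameComp_of_symmGen_posetRel hU hB h).symm
  · exact hVcomp (hs.sameComp_of_symmGen_posetRel hV hB h).symm

theorem isDistinguished_of_regularRel (hmin : CompMinCond s τ)
    (hreg : RegularRel (posetRel s τ)) : IsDistinguished s n τ := by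
  refine ⟨hs, fun B hB B' hB' h₁ h₂ => ?_⟩
  by_cases hcomp : SameComp s B B'
  · exact hs.apply_le_of_sameComp hB hB' hcomp h₁ h₂
  refine hs.apply_le_of_regularRel_of_not_sameComp hmin hreg hB hB' hcomp
    (h₁.lt_of_ne fun hrow => ?_)
  exact hcomp (sameComp_of_le hB hB' ⟨hrow.ge, h₂⟩)

end IsSchurLabeling

theorem IsDistinguished.regularRel_posetRel {s : SkewShape} {n : ℕ} {τ : ℕ × ℕ → Fin n}
    (hd : IsDistinguished s n τ) : RegularRel (posetRel s τ) := by
  rintro x y z ⟨X, hX, Z, hZ, rfl, rfl, hXZ⟩ hbetween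
  obtain ⟨Y, hY, rfl⟩ := hd.1.1.surjOn (Set.mem_univ y)
  by_cases hXY : X ≤ Y
  · exact .inl ⟨X, hX, Y, hY, rfl, rfl, hXY⟩
  by_cases hYZ : Y ≤ Z
  · exact .inr ⟨Y, hY, Z, hZ, rfl, rfl, hYZ⟩
  simp only [Prod.le_def, not_and_or, not_le] at hXZ hXY hYZ
  rcases (by omega : (Y.1 ≤ X.1 ∧ X.2 ≤ Y.2 ∧ Y.1 ≤ Z.1 ∧ Z.2 ≤ Y.2) ∨
      (X.1 ≤ Y.1 ∧ Y.2 ≤ X.2 ∧ Z.1 ≤ Y.1 ∧ Y.2 ≤ Z.2)) with ⟨h₁, h₂, h₃, h₄⟩ | ⟨h₁, h₂, h₃, h₄⟩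
  · have := hd.2 X hX Y hY h₁ h₂
    have := hd.2 Z hZ Y hY h₃ h₄
    rcases hbetween with ⟨_, _⟩ | ⟨_, _⟩ <;> order
  · have := hd.2 Y hY X hX h₁ h₂
    have := hd.2 Y hY Z hZ h₃ h₄
    rcases hbetween with ⟨_, _⟩ | ⟨_, _⟩ <;> order

theorem regular_iff_distinguished_general (s : SkewShape) (n : ℕ) (τ : ℕ × ℕ → Fin n)
    (hschur : IsSchurLabeling s n τ) (hmin : CompMinCond s τ) :
    RegularRel (posetRel s τ) ↔
      (∀ B ∈ s.cells, ∀ B' ∈ s.cells, B'.1 ≤ B.1 → B.2 ≤ B'.2 → τ B' ≤ τ B) :=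
  ⟨fun hreg => (hschur.isDistinguished_of_regularRel hmin hreg).2,
    fun hdist => IsDistinguished.regularRel_posetRel ⟨hschur, hdist⟩⟩

/-- For a Schur labeled skew shape poset `P = poset(τ_P)` (with `τ_P` the canonical
Schur labeling: basic shape and increasing component minima), `P` is regular if and only
if `τ_P` is distinguished. -/
theorem regular_iff_distinguished (s : SkewShape) (n : ℕ) (τ : ℕ × ℕ → Fin n)
    (hschur : IsSchurLabeling s n τ) (hbasic : IsBasic s) (hmin : CompMinCond s τ) :
    RegularRel (posetRel s τ) ↔
      (∀ B ∈ s.cells, ∀ B' ∈ s.cells, B'.1 ≤ B.1 → B.2 ≤ B'.2 → τ B' ≤ τ B) :=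
  regular_iff_distinguished_general s n τ hschur hmin
end
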